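/- arXiv:0711.4740 — 4 statements merged into one kernel-verified Lean document; each statement's English description precedes it below -/
import Mathlib

section
/- Let R be a Noetherian commutative ring, I ⊆ R a proper ideal, M a nonzero finitely generated R-module with IM ≠ M, and a₁,…,a_k ∈ I an M-regular sequence. Then depth(I,M) = k if and only if there exists m ∈ M with m ∉ (a₁,…,a_k)M and I·m ⊆ (a₁,…,a_k)M. -/
open RingTheory.Sequence

/-- The `I`-depth of `M`: the supremum of the lengths of `M`-regular sequences
with all entries in `I`. By Rees' theorem this is the common length of all maximal
`M`-regular sequences in `I`. -/
noncomputable def idealDepth {R : Type*} [CommRing R] (M : Type*) [AddCommGroup M] [Module R M]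
    (I : Ideal R) : ℕ :=
  sSup {n : ℕ | ∃ rs : List R, rs.length = n ∧ (∀ r ∈ rs, r ∈ I) ∧
    RingTheory.Sequence.IsRegular M rs}

/-!
By prime avoidance over the finitely many associated primes, a finitely generated module `Q`
has a nonzero element killed by `I` exactly when no element of `I` is `Q`-regular. So the
element `m` exists iff `rs` cannot be extended by an element of `I`, and it remains to show
(Rees) that all non-extendable regular sequences in `I` have the same length. Given two regular
sequences in `I` of length `n + 1`, prime avoidance gives `z ∈ I` regular modulo every initial
segment of both. Replacing the last entry by `z` does not affect non-extendability (an
elementary exchange argument for two regular elements), and `z` can then be moved to the front,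
which reduces the question to sequences of length `n` on `M ⧸ zM`. Non-extendable sequences
exist because ideals of `R` satisfy the ascending chain condition.
-/

open Ideal Submodule
open scoped Pointwise

section

variable {R : Type*} [CommRing R] {I : Ideal R}

section ZeroDivisors

theorem exists_ne_zero_forall_smul_eq_zero_iff [IsNoetherianRing R] {Q : Type*}
    [AddCommGroup Q] [Module R Q] [Module.Finite R Q] :
    (∃ q : Q, q ≠ 0 ∧ ∀ a ∈ I, a • q = 0) ↔ ∀ a ∈ I, ¬IsSMulRegular Q a := by
  constructor
  · rintro ⟨q, hq, hIq⟩ a ha hreg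
    exact hq (hreg (show a • q = a • 0 by rw [hIq a ha, smul_zero]))
  · intro h
    obtain ⟨p, hp, hIp⟩ : ∃ p ∈ associatedPrimes R Q, I ≤ p :=
      (subset_union_prime_finite (f := id) (associatedPrimes.finite R Q) ⊥ ⊥
        fun p hp _ _ => hp.isPrime).mp
        (by simp only [id, biUnion_associatedPrimes_eq_compl_regular R Q]; exact h)
    obtain ⟨hprime, q, rfl⟩ := isAssociatedPrime_iff.mp hp
    refine ⟨q, fun hq => hprime.ne_top ?_, fun a ha => ?_⟩
    · simp [hq]
    · simpa [mem_colon_singleton] using hIp ha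

theorem exists_notMem_forall_smul_mem_iff [IsNoetherianRing R] {M : Type*} [AddCommGroup M]
    [Module R M] [Module.Finite R M] (N : Submodule R M) :
    (∃ m ∉ N, ∀ a ∈ I, a • m ∈ N) ↔ ∀ a ∈ I, ¬IsSMulRegular (M ⧸ N) a := by
  rw [← exists_ne_zero_forall_smul_eq_zero_iff, N.mkQ_surjective.exists]
  simp only [ne_eq, mkQ_apply, ← Quotient.mk_smul, Quotient.mk_eq_zero]

theorem exists_mem_forall_isSMulRegular [IsNoetherianRing R] {ι : Type*} [Finite ι]
    {Q : ι → Type*} [∀ i, AddCommGroup (Q i)] [∀ i, Module R (Q i)] [∀ i, Module.Finite R (Q i)]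
    (h : ∀ i, ∃ a ∈ I, IsSMulRegular (Q i) a) : ∃ a ∈ I, ∀ i, IsSMulRegular (Q i) a := by
  classical
  by_contra! hI
  have hpi : ∀ a ∈ I, ¬IsSMulRegular (∀ i, Q i) a := fun a ha hreg => by
    obtain ⟨i, hi⟩ := hI a ha
    exact hi fun x y hxy => Pi.single_injective i (hreg (by simp only [← Pi.single_smul, hxy]))
  obtain ⟨q, hq, hIq⟩ := exists_ne_zero_forall_smul_eq_zero_iff.mpr hpi
  obtain ⟨i, hi⟩ := Function.ne_iff.mp hq
  obtain ⟨a, ha, hreg⟩ := h i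
  exact exists_ne_zero_forall_smul_eq_zero_iff.mp ⟨q i, hi, fun b hb => congrFun (hIq b hb) i⟩
    a ha hreg

end ZeroDivisors

section Swap

variable {M : Type*} [AddCommGroup M] [Module R M] {x y z : R}

theorem exists_notMem_smul_top_swap (hx : IsSMulRegular M x) (hy : IsSMulRegular M y)
    (hyI : y ∈ I) (h : ∃ m ∉ x • (⊤ : Submodule R M), ∀ a ∈ I, a • m ∈ x • (⊤ : Submodule R M)) :
    ∃ m ∉ y • (⊤ : Submodule R M), ∀ a ∈ I, a • m ∈ y • (⊤ : Submodule R M) := by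
  simp only [mem_smul_pointwise_iff_exists, mem_top, true_and] at h ⊢
  obtain ⟨m, hm, hIm⟩ := h
  obtain ⟨m', hm'⟩ := hIm y hyI
  refine ⟨m', fun ⟨v, hv⟩ => hm ⟨v, hy ?_⟩, fun a ha => ?_⟩
  · change y • x • v = y • m
    rw [← hm', ← hv, smul_comm]
  · obtain ⟨u, hu⟩ := hIm a ha
    refine ⟨u, hx (show x • y • u = x • a • m' from ?_)⟩
    rw [smul_comm x y, hu, smul_comm x a, hm', smul_comm]

theorem forall_not_isSMulRegular_quotSMulTop_iff [IsNoetherianRing R] [Module.Finite R M]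
    (hxI : x ∈ I) (hyI : y ∈ I) (hx : IsSMulRegular M x) (hy : IsSMulRegular M y) :
    (∀ a ∈ I, ¬IsSMulRegular (QuotSMulTop x M) a) ↔
      ∀ a ∈ I, ¬IsSMulRegular (QuotSMulTop y M) a := by
  rw [← exists_notMem_forall_smul_mem_iff, ← exists_notMem_forall_smul_mem_iff]
  exact ⟨exists_notMem_smul_top_swap hx hy hyI, exists_notMem_smul_top_swap hy hx hxI⟩

theorem IsSMulRegular.quotSMulTop_comm (hx : IsSMulRegular M x)
    (hz : IsSMulRegular (QuotSMulTop x M) z) : IsSMulRegular (QuotSMulTop z M) x := by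
  rw [isSMulRegular_quotient_iff_mem_of_smul_mem] at hz ⊢
  simp only [mem_smul_pointwise_iff_exists, mem_top, true_and] at hz ⊢
  rintro m ⟨n, hn⟩
  obtain ⟨n', rfl⟩ := hz n ⟨m, hn.symm⟩
  exact ⟨n', hx (show x • z • n' = x • m by rw [smul_comm, hn])⟩

variable (M) in
noncomputable def QuotSMulTop.commEquiv (x z : R) :
    QuotSMulTop z (QuotSMulTop x M) ≃ₗ[R] QuotSMulTop x (QuotSMulTop z M) :=
  have h : ∀ (N : Type _) [AddCommGroup N] [Module R N],
      (Ideal.ofList [z] • ⊤ : Submodule R N) = z • ⊤ := fun _ _ _ => by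
    rw [ofList_singleton, ideal_span_singleton_smul]
  quotEquivOfEq _ _ (h _).symm ≪≫ₗ (quotOfListConsSMulTopEquivQuotSMulTopInner M x [z]).symm ≪≫ₗ
    quotOfListConsSMulTopEquivQuotSMulTopOuter M x [z] ≪≫ₗ
    QuotSMulTop.congr x (quotEquivOfEq _ _ (h M))

theorem RingTheory.Sequence.IsWeaklyRegular.quotSMulTop {xs : List R} (hxs : IsWeaklyRegular M xs)
    (hz : ∀ i ≤ xs.length, IsSMulRegular (M ⧸ (ofList (xs.take i) • ⊤ : Submodule R M)) z) :
    IsWeaklyRegular (QuotSMulTop z M) xs := by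
  induction xs generalizing M with
  | nil => exact .nil R _
  | cons x xs ih =>
    rw [isWeaklyRegular_cons_iff] at hxs ⊢
    have hz' (i : ℕ) (hi : i ≤ xs.length) :
        IsSMulRegular
          (QuotSMulTop x M ⧸ (ofList (xs.take i) • ⊤ : Submodule R (QuotSMulTop x M))) z :=
      ((quotOfListConsSMulTopEquivQuotSMulTopInner M x (xs.take i)).isSMulRegular_congr z).mp
        (hz (i + 1) (by simpa using hi))
    have hzx : IsSMulRegular (QuotSMulTop x M) z :=
      ((quotEquivOfEqBot _ (by simp)).isSMulRegular_congr z).mp (hz' 0 (Nat.zero_le _))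
    exact ⟨hxs.1.quotSMulTop_comm hzx,
      ((QuotSMulTop.commEquiv M x z).isWeaklyRegular_congr xs).mp (ih hxs.2 hz')⟩

end Swap

section Rees

variable {M : Type*} [AddCommGroup M] [Module R M]

theorem ofList_smul_top_ne_top (hIM : I • (⊤ : Submodule R M) ≠ ⊤) {xs : List R}
    (hxI : ∀ r ∈ xs, r ∈ I) : (ofList xs • ⊤ : Submodule R M) ≠ ⊤ :=
  ne_top_of_le_ne_top hIM (smul_mono_left (Ideal.span_le.mpr hxI))

theorem RingTheory.Sequence.IsWeaklyRegular.append_singleton {xs : List R} {a : R}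
    (h : IsWeaklyRegular M xs) (ha : IsSMulRegular (M ⧸ (ofList xs • ⊤ : Submodule R M)) a) :
    IsWeaklyRegular M (xs ++ [a]) :=
  (isWeaklyRegular_append_iff M xs [a]).mpr ⟨h, (isWeaklyRegular_singleton_iff _ a).mpr ha⟩

theorem RingTheory.Sequence.IsWeaklyRegular.exists_mem_isSMulRegular_take {xs : List R} {x : R}
    (h : IsWeaklyRegular M (xs ++ [x])) (hI : ∀ r ∈ xs ++ [x], r ∈ I) {i : ℕ}
    (hi : i ≤ xs.length) :
    ∃ a ∈ I, IsSMulRegular (M ⧸ (ofList (xs.take i) • ⊤ : Submodule R M)) a := by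
  have hi' : i < (xs ++ [x]).length := by simpa [Nat.lt_succ_iff] using hi
  refine ⟨(xs ++ [x])[i], hI _ (List.getElem_mem hi'), ?_⟩
  have := h.regular_mod_prev i hi'
  rwa [List.take_append_of_le_length hi] at this

theorem forall_not_isSMulRegular_append_singleton_iff [IsNoetherianRing R] [Module.Finite R M]
    {xs : List R} {x z : R} (hxI : x ∈ I) (hzI : z ∈ I)
    (hx : IsSMulRegular (M ⧸ (ofList xs • ⊤ : Submodule R M)) x)
    (hz : IsSMulRegular (M ⧸ (ofList xs • ⊤ : Submodule R M)) z) :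
    (∀ a ∈ I, ¬IsSMulRegular (M ⧸ (ofList (xs ++ [x]) • ⊤ : Submodule R M)) a) ↔
      ∀ a ∈ I,
        ¬IsSMulRegular (QuotSMulTop z M ⧸ (ofList xs • ⊤ : Submodule R (QuotSMulTop z M))) a := by
  have hperm : ofList (xs ++ [x]) = ofList (x :: xs) := by simp [sup_comm]
  let e₁ := quotEquivOfEq _ _ (congrArg (· • (⊤ : Submodule R M)) hperm) ≪≫ₗ
    quotOfListConsSMulTopEquivQuotSMulTopOuter M x xs
  let e₂ := (quotOfListConsSMulTopEquivQuotSMulTopOuter M z xs).symm ≪≫ₗ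
    quotOfListConsSMulTopEquivQuotSMulTopInner M z xs
  simp only [e₁.isSMulRegular_congr, ← e₂.isSMulRegular_congr]
  exact forall_not_isSMulRegular_quotSMulTop_iff hxI hzI hx hz

theorem forall_not_isSMulRegular_of_length_eq [IsNoetherianRing R] [Module.Finite R M]
    {xs ys : List R} (hlen : xs.length = ys.length) (hxI : ∀ r ∈ xs, r ∈ I)
    (hyI : ∀ r ∈ ys, r ∈ I) (hxs : IsWeaklyRegular M xs) (hys : IsWeaklyRegular M ys)
    (h : ∀ a ∈ I, ¬IsSMulRegular (M ⧸ (ofList xs • ⊤ : Submodule R M)) a) :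
    ∀ a ∈ I, ¬IsSMulRegular (M ⧸ (ofList ys • ⊤ : Submodule R M)) a := by
  induction xs using List.reverseRecOn generalizing M ys with
  | nil => rwa [List.length_eq_zero_iff.mp hlen.symm]
  | append_singleton xs x ih =>
    obtain ⟨ys, y, rfl⟩ := (List.eq_nil_or_concat' ys).resolve_left (by rintro rfl; simp at hlen)
    simp only [List.length_append, List.length_singleton, Nat.add_right_cancel_iff] at hlen
    let N : Fin (xs.length + 1) ⊕ Fin (ys.length + 1) → Submodule R M :=
      Sum.elim (fun i => ofList (xs.take i) • ⊤) (fun i => ofList (ys.take i) • ⊤)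
    obtain ⟨z, hzI, hz⟩ := exists_mem_forall_isSMulRegular (I := I) (Q := fun j => M ⧸ N j) (by
      rintro (i | i)
      exacts [hxs.exists_mem_isSMulRegular_take hxI i.is_le,
        hys.exists_mem_isSMulRegular_take hyI i.is_le])
    have hzx (i : ℕ) (hi : i ≤ xs.length) :
        IsSMulRegular (M ⧸ (ofList (xs.take i) • ⊤ : Submodule R M)) z :=
      hz (.inl ⟨i, Nat.lt_succ_of_le hi⟩)
    have hzy (i : ℕ) (hi : i ≤ ys.length) :
        IsSMulRegular (M ⧸ (ofList (ys.take i) • ⊤ : Submodule R M)) z :=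
      hz (.inr ⟨i, Nat.lt_succ_of_le hi⟩)
    simp only [List.mem_append, List.mem_singleton] at hxI hyI
    rw [isWeaklyRegular_append_iff, isWeaklyRegular_singleton_iff] at hxs hys
    rw [forall_not_isSMulRegular_append_singleton_iff (hyI y (.inr rfl)) hzI hys.2
      (List.take_length (l := ys) ▸ hzy _ le_rfl)]
    rw [forall_not_isSMulRegular_append_singleton_iff (hxI x (.inr rfl)) hzI hxs.2
      (List.take_length (l := xs) ▸ hzx _ le_rfl)] at h
    exact ih hlen (fun r hr => hxI r (.inl hr)) (fun r hr => hyI r (.inl hr))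
      (hxs.1.quotSMulTop hzx) (hys.1.quotSMulTop hzy) h

theorem RingTheory.Sequence.IsWeaklyRegular.length_le_of_forall_not_isSMulRegular
    [IsNoetherianRing R] [Module.Finite R M] {xs ys : List R} (hxI : ∀ r ∈ xs, r ∈ I)
    (hyI : ∀ r ∈ ys, r ∈ I) (hxs : IsWeaklyRegular M xs) (hys : IsWeaklyRegular M ys)
    (h : ∀ a ∈ I, ¬IsSMulRegular (M ⧸ (ofList xs • ⊤ : Submodule R M)) a) :
    ys.length ≤ xs.length := by
  by_contra! hlt
  have htake : IsWeaklyRegular M (ys.take xs.length) :=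
    ((isWeaklyRegular_append_iff M _ (ys.drop xs.length)).mp (by rwa [List.take_append_drop])).1
  exact forall_not_isSMulRegular_of_length_eq (by simp [hlt.le]) hxI
    (fun r hr => hyI r (List.mem_of_mem_take hr)) hxs htake h _ (hyI _ (List.getElem_mem hlt))
    (hys.regular_mod_prev _ hlt)

variable (M) in
theorem exists_isWeaklyRegular_forall_not_isSMulRegular [IsNoetherianRing R]
    (hIM : I • (⊤ : Submodule R M) ≠ ⊤) :
    ∃ xs : List R, (∀ r ∈ xs, r ∈ I) ∧ IsWeaklyRegular M xs ∧
      ∀ a ∈ I, ¬IsSMulRegular (M ⧸ (ofList xs • ⊤ : Submodule R M)) a := by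
  obtain ⟨_, ⟨xs, hxI, hxs, rfl⟩, hmax⟩ := set_has_maximal_iff_noetherian.mpr inferInstance
    {J : Ideal R | ∃ xs : List R, (∀ r ∈ xs, r ∈ I) ∧ IsWeaklyRegular M xs ∧ ofList xs = J}
    ⟨⊥, [], by simp, .nil R M, ofList_nil⟩
  refine ⟨xs, hxI, hxs, fun a ha hreg => hmax _ ⟨xs ++ [a], ?_, ?_, rfl⟩ ?_⟩
  · simpa [or_imp, forall_and] using ⟨hxI, ha⟩
  · exact hxs.append_singleton hreg
  · refine (ofList_append xs [a]).symm ▸ lt_of_le_of_ne le_sup_left fun heq => ?_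
    -- `a ∈ (xs)` acts as zero on the nonzero module `M ⧸ (xs)M`, so it cannot be regular there.
    have haxs : a ∈ ofList xs := heq ▸ Ideal.mem_sup_right (by simp)
    refine ofList_smul_top_ne_top hIM hxI (eq_top_iff.mpr fun m _ => ?_)
    exact (isSMulRegular_quotient_iff_mem_of_smul_mem _ _).mp hreg m (smul_mem_smul haxs trivial)

theorem idealDepth_eq_length [IsNoetherianRing R] [Module.Finite R M]
    (hIM : I • (⊤ : Submodule R M) ≠ ⊤) {xs : List R} (hxI : ∀ r ∈ xs, r ∈ I)
    (hxs : IsWeaklyRegular M xs)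
    (h : ∀ a ∈ I, ¬IsSMulRegular (M ⧸ (ofList xs • ⊤ : Submodule R M)) a) :
    idealDepth M I = xs.length :=
  IsGreatest.csSup_eq ⟨⟨xs, rfl, hxI, (isRegular_iff M xs).mpr
    ⟨hxs, (ofList_smul_top_ne_top hIM hxI).symm⟩⟩,
    fun _ ⟨_, hlen, hyI, hys⟩ => hlen ▸ hxs.length_le_of_forall_not_isSMulRegular hxI hyI
      hys.toIsWeaklyRegular h⟩

end Rees

end

theorem depth_eq_iff_exists_annihilated_mod_general
    {R : Type*} [CommRing R] [IsNoetherianRing R]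
    (M : Type*) [AddCommGroup M] [Module R M] [Module.Finite R M]
    (I : Ideal R) (hIM : I • (⊤ : Submodule R M) ≠ ⊤)
    (k : ℕ) (rs : List R) (hlen : rs.length = k) (hmem : ∀ r ∈ rs, r ∈ I)
    (hreg : RingTheory.Sequence.IsRegular M rs) :
    idealDepth M I = k ↔
      ∃ m : M, m ∉ (Ideal.ofList rs • ⊤ : Submodule R M) ∧
        ∀ a ∈ I, a • m ∈ (Ideal.ofList rs • ⊤ : Submodule R M) := by
  rw [exists_notMem_forall_smul_mem_iff, ← hlen]
  refine ⟨fun hdepth a ha haReg => ?_,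
    fun h => idealDepth_eq_length hIM hmem hreg.toIsWeaklyRegular h⟩
  obtain ⟨xs, hxI, hxs, hmax⟩ := exists_isWeaklyRegular_forall_not_isSMulRegular M hIM
  have hle := hxs.length_le_of_forall_not_isSMulRegular hxI
    (by simpa [or_imp, forall_and] using ⟨hmem, ha⟩) (hreg.toIsWeaklyRegular.append_singleton haReg)
    hmax
  rw [idealDepth_eq_length hIM hxI hxs hmax] at hdepth
  simp only [List.length_append, List.length_singleton] at hle
  omega

theorem depth_eq_iff_exists_annihilated_mod
    {R : Type*} [CommRing R] [IsNoetherianRing R]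
    (M : Type*) [AddCommGroup M] [Module R M] [Module.Finite R M] [Nontrivial M]
    (I : Ideal R) (hI : I ≠ ⊤) (hIM : I • (⊤ : Submodule R M) ≠ ⊤)
    (k : ℕ) (rs : List R) (hlen : rs.length = k) (hmem : ∀ r ∈ rs, r ∈ I)
    (hreg : RingTheory.Sequence.IsRegular M rs) :
    idealDepth M I = k ↔
      ∃ m : M, m ∉ (Ideal.ofList rs • ⊤ : Submodule R M) ∧
        ∀ a ∈ I, a • m ∈ (Ideal.ofList rs • ⊤ : Submodule R M) :=
  depth_eq_iff_exists_annihilated_mod_general M I hIM k rs hlen hmem hreg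
end

section
/- Let R be a Noetherian local ring (or finitely generated graded K-algebra with R₀ = K and maximal homogeneous ideal R₊) and I ⊆ R a proper (homogeneous) ideal. Then depth R ≤ depth(I,R) + dim(R/I). In particular dim R − depth R ≥ height I − depth(I,R). -/
/-
Induct on the length `n` of a weakly regular sequence in `𝔪` on a finite module `M`.
If `I` contains an `M`-regular element `y`, an exchange argument (prime avoidance and
permutability of regular sequences in a local ring) makes `y` the first term of such a
sequence of length `n`, and one passes to `M/yM`. Otherwise prime avoidance puts `I` inside
an associated prime `𝔭` of `M`, and Ischebeck's bound `n ≤ dim R/𝔭 ≤ dim R/I` finishes.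
The second inequality then follows from `height I + dim R/I ≤ dim R`.
-/

open RingTheory.Sequence

/-- The height of an ideal: the infimum of the heights of the prime ideals containing it. -/
noncomputable def idealHeight {R : Type*} [CommRing R] (I : Ideal R) : ℕ∞ :=
  ⨅ (p : PrimeSpectrum R) (_ : I ≤ p.asIdeal), Order.height p

/-- The Krull dimension of a commutative ring, valued in `WithBot ℕ∞`. -/
noncomputable def ringDim (R : Type*) [CommRing R] : WithBot ℕ∞ :=
  Order.krullDim (PrimeSpectrum R)

open IsLocalRing Pointwise

section AssociatedPrimes

variable {R M : Type*} [CommRing R] [IsNoetherianRing R] [AddCommGroup M] [Module R M]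

lemma not_isSMulRegular_of_mem_associatedPrimes {p : Ideal R} (hp : p ∈ associatedPrimes R M)
    {a : R} (ha : a ∈ p) : ¬IsSMulRegular M a := by
  have : a ∈ ⋃ p ∈ associatedPrimes R M, (p : Set R) := Set.mem_biUnion hp ha
  rwa [biUnion_associatedPrimes_eq_compl_regular] at this

variable [Module.Finite R M]

lemma exists_mem_associatedPrimes_le_of_forall_not_isSMulRegular {I : Ideal R}
    (h : ∀ r ∈ I, ¬IsSMulRegular M r) : ∃ p ∈ associatedPrimes R M, I ≤ p := by
  refine (Ideal.subset_union_prime_finite (associatedPrimes.finite R M) (f := id) ⊥ ⊥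
    fun p hp _ _ ↦ hp.isPrime).mp ?_
  simp_rw [id, biUnion_associatedPrimes_eq_compl_regular R M]
  exact h

lemma exists_ne_zero_forall_smul_eq_zero_of_forall_not_isSMulRegular {I : Ideal R}
    (h : ∀ r ∈ I, ¬IsSMulRegular M r) : ∃ w : M, w ≠ 0 ∧ ∀ a ∈ I, a • w = 0 := by
  obtain ⟨p, hp, hIp⟩ := exists_mem_associatedPrimes_le_of_forall_not_isSMulRegular h
  obtain ⟨hprime, w, rfl⟩ := isAssociatedPrime_iff.mp hp
  refine ⟨w, ?_, fun a ha ↦ by simpa using hIp ha⟩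
  rintro rfl
  exact hprime.ne_top (by ext; simp)

lemma Ideal.exists_mem_isSMulRegular_and_isSMulRegular {N : Type*} [AddCommGroup N]
    [Module R N] [Module.Finite R N] {I : Ideal R} (hM : ∃ r ∈ I, IsSMulRegular M r)
    (hN : ∃ r ∈ I, IsSMulRegular N r) :
    ∃ t ∈ I, IsSMulRegular M t ∧ IsSMulRegular N t := by
  by_contra! h
  obtain ⟨p, hp, hIp⟩ :=
    exists_mem_associatedPrimes_le_of_forall_not_isSMulRegular (M := M × N)
      fun t ht hreg ↦ (Prod.isSMulRegular_iff.mp hreg).elim (h t ht)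
  rw [associatedPrimes.prod] at hp
  rcases hp with hp | hp
  · obtain ⟨r, hr, hreg⟩ := hM
    exact not_isSMulRegular_of_mem_associatedPrimes hp (hIp hr) hreg
  · obtain ⟨r, hr, hreg⟩ := hN
    exact not_isSMulRegular_of_mem_associatedPrimes hp (hIp hr) hreg

end AssociatedPrimes

section QuotSMulTop

variable {R M : Type*} [CommRing R] [AddCommGroup M] [Module R M]

lemma Submodule.mem_pointwise_smul_top_iff {c : R} {m : M} :
    m ∈ c • (⊤ : Submodule R M) ↔ ∃ u : M, c • u = m := by
  simp [Submodule.mem_smul_pointwise_iff_exists]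

lemma exists_ne_zero_forall_smul_eq_zero_quotSMulTop_of_quotSMulTop {I : Ideal R} {a c : R}
    (haI : a ∈ I) (ha : IsSMulRegular M a) (hc : IsSMulRegular M c)
    (h : ∃ w : QuotSMulTop c M, w ≠ 0 ∧ ∀ r ∈ I, r • w = 0) :
    ∃ v : QuotSMulTop a M, v ≠ 0 ∧ ∀ r ∈ I, r • v = 0 := by
  obtain ⟨w', hw0, hw⟩ := h
  obtain ⟨w, rfl⟩ := Submodule.Quotient.mk_surjective _ w'
  simp only [ne_eq, ← Submodule.Quotient.mk_smul, Submodule.Quotient.mk_eq_zero,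
    Submodule.mem_pointwise_smul_top_iff] at hw0 hw
  obtain ⟨v, hv⟩ := hw a haI
  refine ⟨Submodule.Quotient.mk v, ?_, fun r hr ↦ ?_⟩
  · rw [ne_eq, Submodule.Quotient.mk_eq_zero, Submodule.mem_pointwise_smul_top_iff]
    rintro ⟨s, rfl⟩
    exact hw0 ⟨s, ha (show a • c • s = a • w by rw [← hv, smul_comm])⟩
  · obtain ⟨u, hu⟩ := hw r hr
    rw [← Submodule.Quotient.mk_smul, Submodule.Quotient.mk_eq_zero,
      Submodule.mem_pointwise_smul_top_iff]
    refine ⟨u, hc (show c • a • u = c • r • v from ?_)⟩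
    rw [smul_comm c a, hu, smul_comm a r, ← hv, smul_comm]

lemma exists_mem_isSMulRegular_quotSMulTop [IsNoetherianRing R] [Module.Finite R M]
    {I : Ideal R} {a b c : R} (ha : a ∈ I) (hb : b ∈ I) (hab : IsWeaklyRegular M [a, b])
    (hc : IsSMulRegular M c) : ∃ t ∈ I, IsSMulRegular (QuotSMulTop c M) t := by
  obtain ⟨ha', hb'⟩ := (isWeaklyRegular_cons_iff M a [b]).mp hab
  rw [isWeaklyRegular_singleton_iff] at hb'
  by_contra! h
  obtain ⟨v, hv0, hv⟩ := exists_ne_zero_forall_smul_eq_zero_quotSMulTop_of_quotSMulTop ha ha' hc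
    (exists_ne_zero_forall_smul_eq_zero_of_forall_not_isSMulRegular h)
  exact hv0 (hb'.right_eq_zero_of_smul (hv b hb))

end QuotSMulTop

section Exchange

variable {R : Type*} [CommRing R] [IsNoetherianRing R] [IsLocalRing R]

lemma isWeaklyRegular_swap {M : Type*} [AddCommGroup M] [Module R M] [Module.Finite R M]
    {a b : R} {rs : List R} (h : IsWeaklyRegular M (a :: b :: rs)) (ha : a ∈ maximalIdeal R)
    (hb : b ∈ maximalIdeal R) (hrs : ∀ r ∈ rs, r ∈ maximalIdeal R) :
    IsWeaklyRegular M (b :: a :: rs) :=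
  isWeaklyRegular_of_perm_of_subset_maximalIdeal h (.swap b a rs)
    (List.forall_mem_cons.mpr ⟨ha, List.forall_mem_cons.mpr ⟨hb, hrs⟩⟩)

theorem exists_isWeaklyRegular_cons_of_isSMulRegular (n : ℕ) {M : Type*} [AddCommGroup M]
    [Module R M] [Module.Finite R M] {rs : List R} (hlen : rs.length = n + 1)
    (hrs : ∀ r ∈ rs, r ∈ maximalIdeal R) (hreg : IsWeaklyRegular M rs) {c : R}
    (hc : c ∈ maximalIdeal R) (hcreg : IsSMulRegular M c) :
    ∃ zs : List R, zs.length = n ∧ (∀ r ∈ zs, r ∈ maximalIdeal R) ∧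
      IsWeaklyRegular M (c :: zs) := by
  induction n generalizing M rs with
  | zero => exact ⟨[], rfl, by simp, (isWeaklyRegular_singleton_iff M c).mpr hcreg⟩
  | succ n ih =>
    obtain ⟨a₀, a₁, rest, hrs₀⟩ : ∃ a₀ a₁ rest, rs = a₀ :: a₁ :: rest := by
      match rs, hlen with
      | a₀ :: a₁ :: rest, _ => exact ⟨a₀, a₁, rest, rfl⟩
    obtain ⟨ys, b, rfl⟩ := rs.eq_nil_or_concat'.resolve_left (by rintro rfl; simp at hlen)
    have hys_len : ys.length = n + 1 := by simpa using hlen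
    have hys : ∀ r ∈ ys, r ∈ maximalIdeal R := fun r hr ↦ hrs r (by simp [hr])
    obtain ⟨hys_reg, hb⟩ := (isWeaklyRegular_append_iff M ys [b]).mp hreg
    rw [isWeaklyRegular_singleton_iff] at hb
    have h01 : IsWeaklyRegular M [a₀, a₁] := by
      rw [hrs₀] at hreg
      exact ((isWeaklyRegular_append_iff M [a₀, a₁] rest).mp hreg).1
    -- `t` is regular on `M/cM` and on `M/(ys)M`, so `ys ++ [t]` and `[c, t]` are regular;
    -- permuting them puts `t` first, and the induction hypothesis applies to `M/tM`.
    obtain ⟨t, ht, htc, hty⟩ := Ideal.exists_mem_isSMulRegular_and_isSMulRegular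
      (exists_mem_isSMulRegular_quotSMulTop (hrs a₀ (by simp [hrs₀]))
        (hrs a₁ (by simp [hrs₀])) h01 hcreg) ⟨b, hrs b (by simp), hb⟩
    have hty : IsWeaklyRegular M (t :: ys) :=
      isWeaklyRegular_of_perm_of_subset_maximalIdeal
        ((isWeaklyRegular_append_iff M ys [t]).mpr
          ⟨hys_reg, (isWeaklyRegular_singleton_iff _ t).mpr hty⟩)
        (List.perm_append_singleton t ys)
        (by
          simp only [List.mem_append, List.mem_singleton]
          rintro r (hr | rfl)
          exacts [hys r hr, ht])
    obtain ⟨htreg, hys_t⟩ := (isWeaklyRegular_cons_iff M t ys).mp hty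
    have hct : IsSMulRegular (QuotSMulTop t M) c := by
      have := isWeaklyRegular_swap ((isWeaklyRegular_cons_iff M c [t]).mpr
        ⟨hcreg, (isWeaklyRegular_singleton_iff _ t).mpr htc⟩) hc ht (by simp)
      exact (isWeaklyRegular_singleton_iff _ c).mp ((isWeaklyRegular_cons_iff M t [c]).mp this).2
    obtain ⟨zs, hzs_len, hzs, hzs_reg⟩ := ih hys_len hys hys_t hct
    exact ⟨t :: zs, by simp [hzs_len], List.forall_mem_cons.mpr ⟨ht, hzs⟩,
      isWeaklyRegular_swap ((isWeaklyRegular_cons_iff M t _).mpr ⟨htreg, hzs_reg⟩) ht hc hzs⟩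

end Exchange

section Ischebeck

variable {R : Type*} [CommRing R] [IsNoetherianRing R] [IsLocalRing R]

lemma exists_mem_associatedPrimes_quotSMulTop_gt {M : Type*} [AddCommGroup M] [Module R M]
    [Module.Finite R M] {x : R} (hx : x ∈ maximalIdeal R) (hxreg : IsSMulRegular M x)
    {p : Ideal R} (hp : p ∈ associatedPrimes R M) :
    ∃ P ∈ associatedPrimes R (QuotSMulTop x M), p < P := by
  obtain ⟨hprime, z, hpz⟩ := isAssociatedPrime_iff.mp hp
  have hz0 : z ≠ 0 := by
    rintro rfl
    exact hprime.ne_top (by ext; simp [hpz])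
  have hxp : x ∉ p := fun h ↦ hz0 (hxreg.right_eq_zero_of_smul (by simpa [hpz] using h))
  set K := Submodule.torsionBySet R M p
  have hK : ∀ w, w ∈ K ↔ ∀ a ∈ p, a • w = 0 := by
    simp [K, Submodule.mem_torsionBySet_iff]
  -- Nakayama: `K ∩ xM = xK`, so `K ⊆ xM` would force `K = 0`.
  obtain ⟨w, hwK, hwx⟩ : ∃ w ∈ K, w ∉ x • (⊤ : Submodule R M) := by
    by_contra! hKx
    have hKbot : K = ⊥ := by
      refine Submodule.eq_bot_of_le_smul_of_le_jacobson_bot (maximalIdeal R) K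
        (IsNoetherian.noetherian K) (fun w hw ↦ ?_) (maximalIdeal_le_jacobson ⊥)
      obtain ⟨u, rfl⟩ := Submodule.mem_pointwise_smul_top_iff.mp (hKx w hw)
      have hu : u ∈ K := (hK u).mpr fun a ha ↦
        hxreg.right_eq_zero_of_smul (by rw [smul_comm, (hK _).mp hw a ha])
      exact Submodule.smul_mem_smul hx hu
    exact hz0 (by simpa [hKbot] using (hK z).mpr fun a ha ↦ by simpa [hpz] using ha)
  have hw0 : (Submodule.Quotient.mk w : QuotSMulTop x M) ≠ 0 := by
    rwa [ne_eq, Submodule.Quotient.mk_eq_zero]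
  obtain ⟨P, hP, hle⟩ := exists_le_isAssociatedPrime_of_isNoetherianRing R _ hw0
  have hann : ∀ a, a • w ∈ x • (⊤ : Submodule R M) → a ∈ P := fun a ha ↦ hle (by
    rwa [Submodule.mem_colon_singleton, Submodule.mem_bot, ← Submodule.Quotient.mk_smul,
      Submodule.Quotient.mk_eq_zero])
  refine ⟨P, hP, lt_of_le_of_ne (fun a ha ↦ hann a (by simp [(hK w).mp hwK a ha])) ?_⟩
  rintro rfl
  exact hxp (hann x (Submodule.mem_pointwise_smul_top_iff.mpr ⟨w, rfl⟩))

/-- Ischebeck's inequality. -/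
theorem length_le_coheight_of_mem_associatedPrimes {M : Type*} [AddCommGroup M] [Module R M]
    [Module.Finite R M] {rs : List R} (hrs : ∀ r ∈ rs, r ∈ maximalIdeal R)
    (hreg : IsWeaklyRegular M rs) {p : Ideal R} (hp : p ∈ associatedPrimes R M) :
    (rs.length : ℕ∞) ≤ Order.coheight (⟨p, hp.isPrime⟩ : PrimeSpectrum R) := by
  induction rs generalizing M p with
  | nil => simp
  | cons x rs ih =>
    obtain ⟨hx, hrs'⟩ := List.forall_mem_cons.mp hrs
    obtain ⟨hxreg, hreg'⟩ := (isWeaklyRegular_cons_iff M x rs).mp hreg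
    obtain ⟨P, hP, hpP⟩ := exists_mem_associatedPrimes_quotSMulTop_gt hx hxreg hp
    calc ((x :: rs).length : ℕ∞) = rs.length + 1 := by simp
      _ ≤ Order.coheight (⟨P, hP.isPrime⟩ : PrimeSpectrum R) + 1 := by
        gcongr; exact ih hrs' hreg' hP
      _ ≤ Order.coheight (⟨p, hp.isPrime⟩ : PrimeSpectrum R) := Order.coheight_add_one_le hpP

end Ischebeck

section Dimension

variable {R : Type*} [CommRing R]

lemma coheight_le_ringKrullDim_quotient {I : Ideal R} {p : PrimeSpectrum R}
    (hIp : I ≤ p.asIdeal) :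
    (Order.coheight p : WithBot ℕ∞) ≤ ringKrullDim (R ⧸ I) := by
  rw [Order.coheight_eq_krullDim_Ici, ringKrullDim_quotient]
  exact Order.krullDim_le_of_strictMono (fun q ↦ ⟨q.1, hIp.trans q.2⟩) fun _ _ h ↦ h

lemma idealHeight_add_ringKrullDim_quotient_le {I : Ideal R} (hI : I ≠ ⊤) :
    (idealHeight I : WithBot ℕ∞) + ringKrullDim (R ⧸ I) ≤ ringKrullDim R := by
  obtain ⟨m, hm, hIm⟩ := Ideal.exists_le_maximal I hI
  have : Nonempty (PrimeSpectrum.zeroLocus (R := R) I) := ⟨⟨⟨m, hm.isPrime⟩, hIm⟩⟩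
  have : Nonempty (PrimeSpectrum R) := ⟨⟨m, hm.isPrime⟩⟩
  rw [ringKrullDim_quotient, Order.krullDim_eq_iSup_coheight_of_nonempty, ringKrullDim,
    Order.krullDim_eq_iSup_height_add_coheight_of_nonempty, ← WithBot.coe_add, WithBot.coe_le_coe,
    ENat.add_iSup]
  refine iSup_le fun q ↦ le_iSup_of_le q.1 (add_le_add (iInf₂_le q.1 q.2) ?_)
  exact Order.coheight_le_coheight_apply_of_strictMono Subtype.val (fun _ _ h ↦ h) q

end Dimension

section Depth

variable {R : Type*} [CommRing R]

lemma idealDepth_le_idealDepth_add {M : Type*} [AddCommGroup M] [Module R M] [Nontrivial M]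
    {I J : Ideal R} (hIJ : I ≤ J) {d : WithBot ℕ∞} (hd : 0 ≤ d)
    (h : ∀ rs : List R, (∀ r ∈ rs, r ∈ J) → IsRegular M rs →
      ∃ ys : List R, (∀ r ∈ ys, r ∈ I) ∧ IsRegular M ys ∧
        (rs.length : WithBot ℕ∞) ≤ ys.length + d) :
    (idealDepth M J : WithBot ℕ∞) ≤ idealDepth M I + d := by
  set S := {n : ℕ | ∃ rs : List R, rs.length = n ∧ (∀ r ∈ rs, r ∈ J) ∧ IsRegular M rs}
  by_cases hS : BddAbove S
  · obtain ⟨rs, hlen, hrs, hreg⟩ : sSup S ∈ S :=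
      Nat.sSup_mem ⟨0, [], rfl, by simp, IsRegular.nil R M⟩ hS
    obtain ⟨ys, hys, hys_reg, hle⟩ := h rs hrs hreg
    have hsub : {n : ℕ | ∃ zs : List R, zs.length = n ∧ (∀ r ∈ zs, r ∈ I) ∧
        IsRegular M zs} ⊆ S :=
      fun n ⟨zs, hn, hzs, hreg⟩ ↦ ⟨zs, hn, fun r hr ↦ hIJ (hzs r hr), hreg⟩
    have : ys.length ≤ idealDepth M I := le_csSup (hS.mono hsub) ⟨ys, rfl, hys, hys_reg⟩
    calc (idealDepth M J : WithBot ℕ∞) = rs.length := by rw [hlen]; rfl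
      _ ≤ ys.length + d := hle
      _ ≤ idealDepth M I + d := by gcongr
  · have h0 : idealDepth M J = 0 := Nat.sSup_of_not_bddAbove hS
    rw [h0, Nat.cast_zero]
    exact add_nonneg (by simp) hd

variable [IsNoetherianRing R] [IsLocalRing R]

theorem exists_isRegular_length_le_add_ringKrullDim_quotient {I : Ideal R} (hI : I ≠ ⊤)
    {M : Type*} [AddCommGroup M] [Module R M] [Module.Finite R M] [Nontrivial M] {rs : List R}
    (hrs : ∀ r ∈ rs, r ∈ maximalIdeal R) (hreg : IsWeaklyRegular M rs) :
    ∃ ys : List R, (∀ r ∈ ys, r ∈ I) ∧ IsRegular M ys ∧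
      (rs.length : WithBot ℕ∞) ≤ ys.length + ringKrullDim (R ⧸ I) := by
  have : Nontrivial (R ⧸ I) := Ideal.Quotient.nontrivial_iff.mpr hI
  obtain ⟨n, hlen⟩ : ∃ n, rs.length = n := ⟨_, rfl⟩
  induction n generalizing M rs with
  | zero =>
    refine ⟨[], by simp, IsRegular.nil R M, ?_⟩
    simpa [hlen] using ringKrullDim_nonneg_of_nontrivial
  | succ n ih =>
    by_cases hI_reg : ∃ y ∈ I, IsSMulRegular M y
    · obtain ⟨y, hyI, hy⟩ := hI_reg
      have hy_max := le_maximalIdeal hI hyI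
      have := nontrivial_quotSMulTop_of_mem_maximalIdeal M hy_max
      obtain ⟨zs, hzs_len, hzs, hzs_reg⟩ :=
        exists_isWeaklyRegular_cons_of_isSMulRegular n hlen hrs hreg hy_max hy
      obtain ⟨ys, hys, hys_reg, hle⟩ :=
        ih hzs ((isWeaklyRegular_cons_iff M y zs).mp hzs_reg).2 hzs_len
      refine ⟨y :: ys, List.forall_mem_cons.mpr ⟨hyI, hys⟩, hys_reg.cons hy, ?_⟩
      calc (rs.length : WithBot ℕ∞) = n + 1 := by simp [hlen]
        _ ≤ ys.length + ringKrullDim (R ⧸ I) + 1 := by gcongr; simpa [hzs_len] using hle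
        _ = (y :: ys).length + ringKrullDim (R ⧸ I) := by push_cast [List.length_cons]; ring
    · push Not at hI_reg
      obtain ⟨p, hp, hIp⟩ := exists_mem_associatedPrimes_le_of_forall_not_isSMulRegular hI_reg
      refine ⟨[], by simp, IsRegular.nil R M, ?_⟩
      calc (rs.length : WithBot ℕ∞) = ((rs.length : ℕ∞) : WithBot ℕ∞) := rfl
        _ ≤ Order.coheight (⟨p, hp.isPrime⟩ : PrimeSpectrum R) :=
          WithBot.coe_le_coe.mpr (length_le_coheight_of_mem_associatedPrimes hrs hreg hp)
        _ ≤ ringKrullDim (R ⧸ I) := coheight_le_ringKrullDim_quotient hIp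
        _ = ([] : List R).length + ringKrullDim (R ⧸ I) := by simp

end Depth

/-- For a Noetherian local ring `R` and a proper ideal `I`, one has
`depth R ≤ depth(I,R) + dim (R/I)`; in particular (using
`height I + dim (R/I) ≤ dim R`) we get `dim R − depth R ≥ height I − depth(I,R)`,
stated here in the subtraction-free form
`height I + depth R ≤ dim R + depth(I,R)`. -/
theorem depth_le_depth_add_dim {R : Type*} [CommRing R] [IsLocalRing R] [IsNoetherianRing R]
    (I : Ideal R) (hI : I ≠ ⊤) :
    (idealDepth R (IsLocalRing.maximalIdeal R) : WithBot ℕ∞) ≤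
        (idealDepth R I : WithBot ℕ∞) + ringDim (R ⧸ I) ∧
      (idealHeight I : WithBot ℕ∞) + (idealDepth R (IsLocalRing.maximalIdeal R) : WithBot ℕ∞) ≤
        ringDim R + (idealDepth R I : WithBot ℕ∞) := by
  have : Nontrivial (R ⧸ I) := Ideal.Quotient.nontrivial_iff.mpr hI
  have hdepth : (idealDepth R (maximalIdeal R) : WithBot ℕ∞) ≤
      idealDepth R I + ringKrullDim (R ⧸ I) :=
    idealDepth_le_idealDepth_add (le_maximalIdeal hI) ringKrullDim_nonneg_of_nontrivial
      fun rs hrs hreg ↦ exists_isRegular_length_le_add_ringKrullDim_quotient hI hrs hreg.1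
  refine ⟨hdepth, ?_⟩
  calc (idealHeight I : WithBot ℕ∞) + idealDepth R (maximalIdeal R)
      ≤ idealHeight I + (idealDepth R I + ringKrullDim (R ⧸ I)) := by gcongr
    _ = (idealHeight I + ringKrullDim (R ⧸ I)) + idealDepth R I := by abel
    _ ≤ ringKrullDim R + idealDepth R I := by
      gcongr; exact idealHeight_add_ringKrullDim_quotient_le hI
end

section
/- Let G be a group, U a representation of G over a field K, g ∈ Z¹(G,U), and Ũ = U ⊕ K the extended module with action σ·(u,λ) = (σu + λg(σ), λ). Let π: Ũ → K, (u,λ) ↦ λ. Then π is a G-invariant element of the dual module Ũ*, and the cocycle π ⊗ g ∈ Z¹(G, Ũ* ⊗ U) is a coboundary, i.e. π ⊗ g = 0 in H¹(G, Ũ* ⊗ U). -/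
theorem projection_invariant_and_pi_tensor_g_coboundary
    {K U G : Type*} [Field K] [AddCommGroup U] [Module K U] [Group G]
    (ρ : Representation K G U) (g : G → U)
    (hg : ∀ σ τ : G, g (σ * τ) = ρ σ (g τ) + g σ)
    (ρg : Representation K G (U × K))
    (hρg : ∀ (σ : G) (u : U) (l : K), ρg σ (u, l) = (ρ σ u + l • g σ, l)) :
    -- `π : Ũ → K, (u,λ) ↦ λ` is `G`-invariant (as an element of the dual module `Ũ*`,
    -- on which `σ` acts by precomposition with `ρg σ⁻¹`)
    (∀ (σ : G) (x : U × K), ((ρg σ⁻¹) x).2 = x.2) ∧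
    -- the cocycle `π ⊗ g`, viewed in `Hom_K(Ũ, U) ≅ Ũ* ⊗ U` as `σ ↦ (x ↦ π(x) • g σ)`,
    -- is a coboundary: there is `h` with `π ⊗ g(σ) = σ·h − h` for all `σ`
    ∃ h : (U × K) →ₗ[K] U,
      ∀ (σ : G) (x : U × K), x.2 • g σ = ρ σ (h (ρg σ⁻¹ x)) - h x := by
  have hg1 : g 1 = 0 := by
    have := hg 1 1
    simp only [one_mul, map_one, Module.End.one_apply] at this
    exact (add_eq_right.mp this.symm)
  constructor
  · intro σ x
    have := hρg σ⁻¹ x.1 x.2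
    rw [show ((x.1, x.2) : U × K) = x from rfl] at this
    rw [this]
  · refine ⟨-(LinearMap.fst K U K), fun σ x => ?_⟩
    have hx := hρg σ⁻¹ x.1 x.2
    rw [show ((x.1, x.2) : U × K) = x from rfl] at hx
    have hinv : ρ σ (g σ⁻¹) = -g σ := by
      have := hg σ σ⁻¹
      simp only [mul_inv_cancel] at this
      rw [hg1] at this
      exact eq_neg_of_add_eq_zero_left this.symm
    simp only [hx, LinearMap.neg_apply, LinearMap.fst_apply, map_neg, map_add, map_smul,
      sub_neg_eq_add, hinv]
    have : (ρ σ) ((ρ σ⁻¹) x.1) = x.1 := by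
      rw [← LinearMap.comp_apply, ← Module.End.mul_eq_comp, ← map_mul, mul_inv_cancel, map_one,
        Module.End.one_apply]
    rw [this]
    module
end

section
/- Let A be a commutative ring, G a group acting on A by ring automorphisms, g ∈ Z¹(G,A), and a₁, a₂, a₃ ∈ A^G with b₁, b₂, b₃ ∈ A satisfying a_i·g(σ) = σ·b_i − b_i for all σ ∈ G, i = 1,2,3. Then each u_{ij} := a_i b_j − a_j b_i is G-invariant (lies in A^G), and (a₁b₂ − a₂b₁)·a₃ ∈ (a₁, a₂)·A^G, the ideal of A^G generated by a₁ and a₂. -/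
theorem u_invariant_and_m_a3_in_ideal
    {A G : Type*} [CommRing A] [Group G] (ρ : G →* (A ≃+* A))
    (g : G → A) (hg : ∀ σ τ : G, g (σ * τ) = ρ σ (g τ) + g σ)
    (a₁ a₂ a₃ : A)
    (ha₁ : ∀ σ : G, ρ σ a₁ = a₁) (ha₂ : ∀ σ : G, ρ σ a₂ = a₂) (ha₃ : ∀ σ : G, ρ σ a₃ = a₃)
    (b₁ b₂ b₃ : A)
    (hb₁ : ∀ σ : G, a₁ * g σ = ρ σ b₁ - b₁)
    (hb₂ : ∀ σ : G, a₂ * g σ = ρ σ b₂ - b₂)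
    (hb₃ : ∀ σ : G, a₃ * g σ = ρ σ b₃ - b₃) :
    -- each `u_{ij} = a_i b_j − a_j b_i` is `G`-invariant
    (∀ σ : G, ρ σ (a₁ * b₂ - a₂ * b₁) = a₁ * b₂ - a₂ * b₁) ∧
    (∀ σ : G, ρ σ (a₁ * b₃ - a₃ * b₁) = a₁ * b₃ - a₃ * b₁) ∧
    (∀ σ : G, ρ σ (a₂ * b₃ - a₃ * b₂) = a₂ * b₃ - a₃ * b₂) ∧
    -- and `(a₁b₂ − a₂b₁)·a₃` lies in the ideal of `A^G` generated by `a₁` and `a₂`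
    (∃ c₁ c₂ : A, (∀ σ : G, ρ σ c₁ = c₁) ∧ (∀ σ : G, ρ σ c₂ = c₂) ∧
      (a₁ * b₂ - a₂ * b₁) * a₃ = c₁ * a₁ + c₂ * a₂) := by
  have key : ∀ (a a' b b' : A), (∀ σ : G, ρ σ a = a) → (∀ σ : G, ρ σ a' = a') →
      (∀ σ : G, a * g σ = ρ σ b - b) → (∀ σ : G, a' * g σ = ρ σ b' - b') →
      ∀ σ : G, ρ σ (a * b' - a' * b) = a * b' - a' * b := by
    intro a a' b b' ha ha' hb hb' σ
    have h1 : ρ σ b = b + a * g σ := by rw [hb σ]; ring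
    have h2 : ρ σ b' = b' + a' * g σ := by rw [hb' σ]; ring
    simp only [map_sub, map_mul, ha, ha', h1, h2]
    ring
  have k12 := key a₁ a₂ b₁ b₂ ha₁ ha₂ hb₁ hb₂
  have k13 := key a₁ a₃ b₁ b₃ ha₁ ha₃ hb₁ hb₃
  have k23 := key a₂ a₃ b₂ b₃ ha₂ ha₃ hb₂ hb₃
  refine ⟨k12, k13, k23, -(a₂ * b₃ - a₃ * b₂), a₁ * b₃ - a₃ * b₁, ?_, k13, by ring⟩
  intro σ
  rw [map_neg, k23 σ]
end
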